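/- arXiv:2401.07948 — 2 statements merged into one kernel-verified Lean document; each statement's English description precedes it below -/
import Mathlib

section
/- Every Göpel tetrad g in J(C)_2 satisfies |g ∩ I(T_α)| ∈ {0, 2} for every trope index α. -/
open Finset

/-- The index set `J(C)_2`, modeled as subsets of `{1,...,6}` (as `Fin 6`):
`0 = 66` is the empty set, and `ij` is the pair `{i,j}`. -/
abbrev Jset := Finset (Fin 6)

/-- The 16 elements of `J(C)_2`: the empty set (the zero element `0 = 66`)
and the 15 two-element subsets `ij`. -/
def isNode (s : Jset) : Prop := s = ∅ ∨ s.card = 2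

instance : DecidablePred isNode := fun s => inferInstanceAs (Decidable (s = ∅ ∨ s.card = 2))

/-- Addition on `J(C)_2`: `ij + jk = ik` and `ij + kl = mn` for
`{i,j,k,l,m,n} = {1,...,6}`; realized by symmetric difference, taking the
complement when the two pairs are disjoint. -/
def jadd (a b : Jset) : Jset :=
  if (symmDiff a b).card = 4 then (symmDiff a b)ᶜ else symmDiff a b

/-- The sixteen nodes as a `Finset`. -/
def nodes : Finset Jset := Finset.univ.filter isNode

/-- `I(T_0) = {66, 16, 26, 36, 46, 56}`: the zero element together with all
pairs containing `6` (encoded as `5 : Fin 6`). -/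
def IT0 : Finset Jset :=
  Finset.univ.filter (fun s => s = ∅ ∨ (s.card = 2 ∧ (5 : Fin 6) ∈ s))

/-- The trope incidence sets of the `(16,6)`-configuration, given by the
explicit case description: `I(T_0) = {0,16,26,36,46,56}`,
`I(T_{i6}) = {0, i6, ij, ik, il, im}` and `I(T_{ij}) = {i6, j6, ij, lm, ln, mn}`. -/
def ITrope (b : Jset) : Finset Jset :=
  if b = ∅ then IT0
  else if (5 : Fin 6) ∈ b then
    insert ∅ (Finset.univ.filter (fun s => s.card = 2 ∧ b \ {5} ⊆ s))
  else
    Finset.univ.filter (fun s => s.card = 2 ∧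
      (((5 : Fin 6) ∈ s ∧ s ∩ b ≠ ∅) ∨ s = b ∨ ((5 : Fin 6) ∉ s ∧ s ∩ b = ∅)))

/-- A Göpel tetrad: a 4-element subset of `J(C)_2` no three of whose elements
lie in a common trope incidence set. -/
def isGopel (g : Finset Jset) : Prop :=
  g.card = 4 ∧ (∀ a ∈ g, isNode a) ∧ ∀ b ∈ nodes, (g ∩ ITrope b).card ≤ 2

instance : DecidablePred isGopel := fun g => by
  unfold isGopel
  infer_instance

/-- A Weber hexad: a 6-element subset of `J(C)_2` no four of whose elements lie
in a common trope incidence set and no four of which form a Göpel tetrad. -/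
def isWeber (w : Finset Jset) : Prop :=
  w.card = 6 ∧ (∀ a ∈ w, isNode a) ∧ (∀ b ∈ nodes, (w ∩ ITrope b).card ≤ 3) ∧
    ∀ g ∈ w.powerset, ¬ isGopel g

instance : DecidablePred isWeber := fun w => by
  unfold isWeber
  infer_instance


set_option maxRecDepth 100000 in
lemma keyA : ∀ a ∈ nodes, (nodes.filter (fun b => a ∈ ITrope b)).card = 6 := by decide

set_option maxRecDepth 100000 in
lemma keyB : ∀ a ∈ nodes, ∀ c ∈ nodes, a ≠ c →
    (nodes.filter (fun b => a ∈ ITrope b ∧ c ∈ ITrope b)).card = 2 := by decide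

lemma card_inter_as_sum (g S : Finset Jset) :
    (g ∩ S).card = ∑ a ∈ g, if a ∈ S then 1 else 0 := by
  rw [← Finset.filter_mem_eq_inter]
  rw [Finset.card_filter]

lemma myOffDiag_inter (g S : Finset Jset) :
    (g ∩ S).offDiag = g.offDiag.filter (fun p => p.1 ∈ S ∧ p.2 ∈ S) := by
  ext p
  simp only [Finset.mem_offDiag, Finset.mem_filter, Finset.mem_inter]
  tauto

/-- Every Göpel tetrad meets every trope incidence set in either 0 or 2 nodes. -/
theorem statement4 :
    ∀ g : Finset Jset, isGopel g → ∀ b ∈ nodes,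
      (g ∩ ITrope b).card = 0 ∨ (g ∩ ITrope b).card = 2 := by
  intro g hg
  obtain ⟨hcard, hnode, hle⟩ := hg
  have hsub : ∀ a ∈ g, a ∈ nodes := fun a ha =>
    Finset.mem_filter.mpr ⟨Finset.mem_univ a, hnode a ha⟩
  -- first sum
  have h1 : ∑ b ∈ nodes, (g ∩ ITrope b).card = 24 := by
    simp only [card_inter_as_sum]
    rw [Finset.sum_comm]
    have : ∀ a ∈ g, (∑ b ∈ nodes, if a ∈ ITrope b then 1 else 0) = 6 := by
      intro a ha
      rw [← Finset.card_filter]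
      exact keyA a (hsub a ha)
    rw [Finset.sum_congr rfl this, Finset.sum_const, hcard]
    rfl
  -- second sum
  have h2 : ∑ b ∈ nodes, (g ∩ ITrope b).offDiag.card = 24 := by
    have : ∀ b, (g ∩ ITrope b).offDiag.card
        = ∑ p ∈ g.offDiag, if p.1 ∈ ITrope b ∧ p.2 ∈ ITrope b then 1 else 0 := by
      intro b
      rw [myOffDiag_inter, Finset.card_filter]
    simp only [this]
    rw [Finset.sum_comm]
    have h3 : ∀ p ∈ g.offDiag,
        (∑ b ∈ nodes, if p.1 ∈ ITrope b ∧ p.2 ∈ ITrope b then 1 else 0) = 2 := by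
      intro p hp
      rw [Finset.mem_offDiag] at hp
      rw [← Finset.card_filter]
      exact keyB p.1 (hsub _ hp.1) p.2 (hsub _ hp.2.1) hp.2.2
    rw [Finset.sum_congr rfl h3, Finset.sum_const, Finset.offDiag_card, hcard]
    rfl
  -- pointwise
  have hptle : ∀ b ∈ nodes, (g ∩ ITrope b).offDiag.card ≤ (g ∩ ITrope b).card := by
    intro b hb
    rw [Finset.offDiag_card]
    have h := hle b hb
    set n := (g ∩ ITrope b).card
    interval_cases n <;> omega
  have heq : ∀ b ∈ nodes, (g ∩ ITrope b).offDiag.card = (g ∩ ITrope b).card := by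
    rw [← Finset.sum_eq_sum_iff_of_le hptle]
    omega
  intro b hb
  have h4 := heq b hb
  rw [Finset.offDiag_card] at h4
  have h5 := hle b hb
  set n := (g ∩ ITrope b).card
  interval_cases n <;> omega
end

section
/- The Hutchinson–Göpel-type involution z_g for g = {46,56,14,15}, defined on NS(S)⊗Q by the table: z_g fixes T_0, T_16, T_23, T_45, N_24, N_34, N_25, N_35; swaps (Λ, 3Λ−2(N_46+N_56+N_14+N_15)); swaps (N_β, Λ−(N_46+N_56+N_14+N_15)+N_{β+(45)}) for β ∈ g; swaps (T_β, Λ−(N_46+N_56+N_14+N_15)+T_{β+(45)}) for β ∈ {26,36,12,13}; and swaps the pairs (N_0,N_16), (N_26,N_36), (N_12,N_13), (N_23,N_45), (T_46,T_15), (T_56,T_14), (T_24,T_35), (T_25,T_34) — is an isometry of the lattice NS(S) (preserves the intersection form) and is an involution. -/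
open Finset

/-- `NS(S) ⊗ ℚ`, with basis `{Λ} ∪ {N_α : α ∈ J(C)_2}`: a vector is a pair of
the `Λ`-coordinate and the function of `N_α`-coordinates. -/
abbrev V := ℚ × (Jset → ℚ)

/-- The intersection form: `Λ² = 4`, `N_α² = -2`, all cross terms `0`. -/
def form (x y : V) : ℚ := 4 * x.1 * y.1 - 2 * ∑ a ∈ nodes, x.2 a * y.2 a

/-- The class `Λ`. -/
def Lam : V := (1, fun _ => 0)

/-- The class `N_α`. -/
def Nv (a : Jset) : V := (0, fun b => if b = a then 1 else 0)

/-- The trope class `T_β = (Λ - Σ_{α ∈ I(T_β)} N_α)/2`. -/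
def Tv (b : Jset) : V := (2⁻¹ : ℚ) • (Lam - ∑ a ∈ ITrope b, Nv a)

/-- `Q = N_46 + N_56 + N_14 + N_15` (for the Göpel tetrad `g = {46,56,14,15}`,
encoded as `{{3,5},{4,5},{0,3},{0,4}}`). -/
def Qv : V := Nv {3,5} + Nv {4,5} + Nv {0,3} + Nv {0,4}

/-- The permutation of node indices underlying `z_g` on the twelve nodes not in
`g`: `(0,16)`, `(26,36)`, `(12,13)`, `(23,45)` are swapped and
`24, 34, 25, 35` are fixed. -/
def swapN : Jset → Jset := fun a =>
  if a = ∅ then {0,5} else if a = ({0,5} : Jset) then ∅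
  else if a = ({1,5} : Jset) then {2,5} else if a = ({2,5} : Jset) then {1,5}
  else if a = ({0,1} : Jset) then {0,2} else if a = ({0,2} : Jset) then {0,1}
  else if a = ({1,2} : Jset) then {3,4} else if a = ({3,4} : Jset) then {1,2}
  else a

/-- The image of the node class `N_α` under `z_g` for `g = {46,56,14,15}`:
for `β ∈ g`, `N_β ↦ Λ - Q + N_{β+(45)}`; the other nodes are permuted by
`swapN`. -/
def nimg : Jset → V := fun a =>
  if a = ({3,5} : Jset) then Lam - Qv + Nv {4,5}
  else if a = ({4,5} : Jset) then Lam - Qv + Nv {3,5}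
  else if a = ({0,3} : Jset) then Lam - Qv + Nv {0,4}
  else if a = ({0,4} : Jset) then Lam - Qv + Nv {0,3}
  else Nv (swapN a)

/-- The Hutchinson–Göpel-type involution `z_g` (for `g = {46,56,14,15}`) as the
linear extension of the table: `Λ ↦ 3Λ - 2Q` and `N_α ↦ nimg α`. -/
def zmap (x : V) : V :=
  x.1 • ((3 : ℚ) • Lam - (2 : ℚ) • Qv) + ∑ a ∈ nodes, x.2 a • nimg a



def zU : V := (3:ℚ) • Lam - (2:ℚ) • Qv

lemma form_add_left (x y z : V) : form (x+y) z = form x z + form y z := by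
  simp [form, add_mul, Finset.sum_add_distrib]; ring
lemma form_add_right (x y z : V) : form x (y+z) = form x y + form x z := by
  simp [form, mul_add, Finset.sum_add_distrib]; ring
lemma form_smul_left (c : ℚ) (x z : V) : form (c • x) z = c * form x z := by
  have h : ∑ a ∈ nodes, (c * x.2 a) * z.2 a = c * ∑ a ∈ nodes, x.2 a * z.2 a := by
    rw [Finset.mul_sum]; exact Finset.sum_congr rfl (fun a _ => by ring)
  simp only [form, Prod.smul_fst, Prod.smul_snd, Pi.smul_apply, smul_eq_mul, h]; ring
lemma form_smul_right (c : ℚ) (x z : V) : form x (c • z) = c * form x z := by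
  have h : ∑ a ∈ nodes, x.2 a * (c * z.2 a) = c * ∑ a ∈ nodes, x.2 a * z.2 a := by
    rw [Finset.mul_sum]; exact Finset.sum_congr rfl (fun a _ => by ring)
  simp only [form, Prod.smul_fst, Prod.smul_snd, Pi.smul_apply, smul_eq_mul, h]; ring
lemma form_sub_left (x y z : V) : form (x - y) z = form x z - form y z := by
  rw [sub_eq_add_neg, form_add_left, show -y = (-1:ℚ) • y by module, form_smul_left]; ring
lemma form_sub_right (x y z : V) : form x (y - z) = form x y - form x z := by
  rw [sub_eq_add_neg, form_add_right, show -z = (-1:ℚ) • z by module, form_smul_right]; ring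
lemma form_zero_left (z : V) : form 0 z = 0 := by simp [form]
lemma form_sum_left (s : Finset Jset) (f : Jset → V) (z : V) :
    form (∑ a ∈ s, f a) z = ∑ a ∈ s, form (f a) z := by
  induction s using Finset.cons_induction with
  | empty => simp [form_zero_left]
  | cons a s ha ih => rw [Finset.sum_cons, Finset.sum_cons, form_add_left, ih]
lemma form_zero_right (z : V) : form z 0 = 0 := by simp [form]
lemma form_sum_right (s : Finset Jset) (f : Jset → V) (z : V) :
    form z (∑ a ∈ s, f a) = ∑ a ∈ s, form z (f a) := by
  induction s using Finset.cons_induction with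
  | empty => simp [form_zero_right]
  | cons a s ha ih => rw [Finset.sum_cons, Finset.sum_cons, form_add_right, ih]

lemma zmap_add (x y : V) : zmap (x + y) = zmap x + zmap y := by
  simp only [zmap, Prod.fst_add, Prod.snd_add, Pi.add_apply, add_smul, Finset.sum_add_distrib]
  module
lemma zmap_smul (c : ℚ) (x : V) : zmap (c • x) = c • zmap x := by
  simp only [zmap, Prod.smul_fst, Prod.smul_snd, Pi.smul_apply, smul_eq_mul, mul_smul,
    ← Finset.smul_sum, smul_add]
lemma zmap_sub (x y : V) : zmap (x - y) = zmap x - zmap y := by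
  rw [sub_eq_add_neg, zmap_add, show -y = (-1:ℚ) • y by module, zmap_smul]; module
lemma zmap_sum (s : Finset Jset) (f : Jset → V) : zmap (∑ a ∈ s, f a) = ∑ a ∈ s, zmap (f a) := by
  induction s using Finset.cons_induction with
  | empty => simp [zmap]
  | cons a s ha ih => rw [Finset.sum_cons, Finset.sum_cons, zmap_add, ih]

lemma zmap_Lam : zmap Lam = zU := by
  simp [zmap, Lam, zU]
lemma zmap_Nv {a : Jset} (ha : a ∈ nodes) : zmap (Nv a) = nimg a := by
  simp only [zmap, Nv, ite_smul, one_smul, zero_smul, Finset.sum_ite_eq', ha, if_true]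
  simp

def gset : Finset Jset := {{3,5},{4,5},{0,3},{0,4}}
def pim (a : Jset) : Jset :=
  if a = ({3,5}:Jset) then {4,5} else if a = ({4,5}:Jset) then {3,5}
  else if a = ({0,3}:Jset) then {0,4} else if a = ({0,4}:Jset) then {0,3}
  else swapN a
noncomputable def cg (a : Jset) : ℚ := if a ∈ gset then 1 else 0

lemma nimg_eq (a : Jset) : nimg a = cg a • (Lam - Qv) + Nv (pim a) := by
  by_cases h1 : a = ({3,5}:Jset)
  · subst h1; show Lam - Qv + Nv {4,5} = _
    rw [show cg {3,5} = 1 from by simp [cg, gset], show pim {3,5} = {4,5} from rfl]; module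
  by_cases h2 : a = ({4,5}:Jset)
  · subst h2; show Lam - Qv + Nv {3,5} = _
    rw [show cg {4,5} = 1 from by simp [cg, gset], show pim {4,5} = {3,5} from rfl]; module
  by_cases h3 : a = ({0,3}:Jset)
  · subst h3; show Lam - Qv + Nv {0,4} = _
    rw [show cg {0,3} = 1 from by simp [cg, gset], show pim {0,3} = {0,4} from rfl]; module
  by_cases h4 : a = ({0,4}:Jset)
  · subst h4; show Lam - Qv + Nv {0,3} = _
    rw [show cg {0,4} = 1 from by simp [cg, gset], show pim {0,4} = {0,3} from rfl]; module
  · have hc : cg a = 0 := by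
      simp only [cg, gset, Finset.mem_insert, Finset.mem_singleton, h1, h2, h3, h4, if_neg]
      simp [h1, h2, h3, h4]
    rw [hc, nimg, pim, if_neg h1, if_neg h2, if_neg h3, if_neg h4,
      if_neg h1, if_neg h2, if_neg h3, if_neg h4]
    module

lemma P1 : ∀ a ∈ nodes, pim a ∈ nodes := by decide
lemma P2 : ∀ a ∈ nodes, ∀ b ∈ nodes, (pim a = pim b ↔ a = b) := by decide
lemma P3 : ∀ a ∈ nodes, (pim a ∈ gset ↔ a ∈ gset) := by decide
lemma P4 : ∀ a ∈ nodes, pim (pim a) = a := by decide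
lemma cg_pim {a : Jset} (ha : a ∈ nodes) : cg (pim a) = cg a := by
  simp only [cg, P3 a ha]

lemma formLL : form Lam Lam = 4 := by simp [form, Lam]
lemma formLN (a : Jset) : form Lam (Nv a) = 0 := by simp [form, Lam, Nv]
lemma formNL (a : Jset) : form (Nv a) Lam = 0 := by simp [form, Lam, Nv]
lemma formNN {a : Jset} (ha : a ∈ nodes) (b : Jset) :
    form (Nv a) (Nv b) = if a = b then -2 else 0 := by
  have h : ∀ c : Jset, (if c = a then (1:ℚ) else 0) * (if c = b then (1:ℚ) else 0)
      = if c = a then (if c = b then (1:ℚ) else 0) else 0 := by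
    intro c; split_ifs <;> norm_num
  simp only [form, Nv, h, Finset.sum_ite_eq' nodes a, ha, if_true]
  split_ifs <;> norm_num
lemma formNQ {a : Jset} (ha : a ∈ nodes) : form (Nv a) Qv = -2 * cg a := by
  rw [Qv, form_add_right, form_add_right, form_add_right,
    formNN ha, formNN ha, formNN ha, formNN ha]
  by_cases h1 : a = ({3,5}:Jset)
  · subst h1; simp (config := { decide := true }) [cg, gset]
  by_cases h2 : a = ({4,5}:Jset)
  · subst h2; simp (config := { decide := true }) [cg, gset]
  by_cases h3 : a = ({0,3}:Jset)
  · subst h3; simp (config := { decide := true }) [cg, gset]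
  by_cases h4 : a = ({0,4}:Jset)
  · subst h4; simp (config := { decide := true }) [cg, gset]
  · have hc : cg a = 0 := by simp [cg, gset, h1, h2, h3, h4]
    simp [h1, h2, h3, h4, hc]
lemma formLQ : form Lam Qv = 0 := by
  rw [Qv, form_add_right, form_add_right, form_add_right]; simp [formLN]
lemma formQL : form Qv Lam = 0 := by
  rw [Qv, form_add_left, form_add_left, form_add_left]; simp [formNL]
lemma formQN {a : Jset} (ha : a ∈ nodes) : form Qv (Nv a) = -2 * cg a := by
  rw [Qv, form_add_left, form_add_left, form_add_left,
    formNN (show ({3,5}:Jset) ∈ nodes from by decide),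
    formNN (show ({4,5}:Jset) ∈ nodes from by decide),
    formNN (show ({0,3}:Jset) ∈ nodes from by decide),
    formNN (show ({0,4}:Jset) ∈ nodes from by decide)]
  by_cases h1 : a = ({3,5}:Jset)
  · subst h1; simp (config := { decide := true }) [cg, gset]
  by_cases h2 : a = ({4,5}:Jset)
  · subst h2; simp (config := { decide := true }) [cg, gset]
  by_cases h3 : a = ({0,3}:Jset)
  · subst h3; simp (config := { decide := true }) [cg, gset]
  by_cases h4 : a = ({0,4}:Jset)
  · subst h4; simp (config := { decide := true }) [cg, gset]
  · have hc : cg a = 0 := by simp [cg, gset, h1, h2, h3, h4]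
    simp [hc, Ne.symm h1, Ne.symm h2, Ne.symm h3, Ne.symm h4]
lemma formQQ : form Qv Qv = -8 := by
  nth_rewrite 1 [Qv]
  rw [form_add_left, form_add_left, form_add_left,
    formNQ (show ({3,5}:Jset) ∈ nodes from by decide),
    formNQ (show ({4,5}:Jset) ∈ nodes from by decide),
    formNQ (show ({0,3}:Jset) ∈ nodes from by decide),
    formNQ (show ({0,4}:Jset) ∈ nodes from by decide)]
  simp (config := { decide := true }) [cg, gset]; norm_num

lemma F1 : form zU zU = 4 := by
  simp only [zU, form_sub_left, form_sub_right, form_smul_left, form_smul_right,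
    formLL, formLQ, formQL, formQQ]
  norm_num
lemma FuN : ∀ a ∈ nodes, form zU (nimg a) = 0 := by
  intro a ha
  simp only [nimg_eq, zU, form_add_right, form_sub_left, form_sub_right, form_smul_left,
    form_smul_right, formLL, formLQ, formQL, formQQ, formLN, formQN (P1 a ha), cg_pim ha]
  ring
lemma FNu : ∀ a ∈ nodes, form (nimg a) zU = 0 := by
  intro a ha
  simp only [nimg_eq, zU, form_add_left, form_sub_left, form_sub_right, form_smul_left,
    form_smul_right, formLL, formLQ, formQL, formQQ, formNL, formNQ (P1 a ha), cg_pim ha]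
  ring
lemma FNN : ∀ a ∈ nodes, ∀ b ∈ nodes, form (nimg a) (nimg b) = if a = b then -2 else 0 := by
  intro a ha b hb
  simp only [nimg_eq, form_add_left, form_add_right, form_smul_left, form_smul_right,
    form_sub_left, form_sub_right, formLL, formLQ, formQL, formQQ, formLN, formNL,
    formQN (P1 b hb), formNQ (P1 a ha), formNN (P1 a ha), cg_pim ha, cg_pim hb]
  simp only [P2 a ha b hb]
  have h2 : cg a * cg b * (4 - 0 - (0 - -8)) + cg a * (0 - -2 * cg b) + (cg b * (0 - -2 * cg a)) = 0 := by ring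
  split_ifs with h <;> linarith [h2]

lemma zmap_eq (x : V) : zmap x = x.1 • zU + ∑ a ∈ nodes, x.2 a • nimg a := rfl

lemma zmap_Qv : zmap Qv = (4:ℚ) • Lam - (3:ℚ) • Qv := by
  rw [Qv, zmap_add, zmap_add, zmap_add,
    zmap_Nv (show ({3,5}:Jset) ∈ nodes from by decide),
    zmap_Nv (show ({4,5}:Jset) ∈ nodes from by decide),
    zmap_Nv (show ({0,3}:Jset) ∈ nodes from by decide),
    zmap_Nv (show ({0,4}:Jset) ∈ nodes from by decide),
    show nimg {3,5} = Lam - Qv + Nv {4,5} from rfl,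
    show nimg {4,5} = Lam - Qv + Nv {3,5} from rfl,
    show nimg {0,3} = Lam - Qv + Nv {0,4} from rfl,
    show nimg {0,4} = Lam - Qv + Nv {0,3} from rfl]
  simp only [Qv]; module
lemma zmap_zU : zmap zU = Lam := by
  rw [zU, zmap_sub, zmap_smul, zmap_smul, zmap_Lam, zmap_Qv, zU]; module
lemma zmap_nimg : ∀ a ∈ nodes, zmap (nimg a) = Nv a := by
  intro a ha
  rw [nimg_eq, zmap_add, zmap_smul, zmap_sub, zmap_Lam, zmap_Qv,
    zmap_Nv (P1 a ha), nimg_eq (pim a), P4 a ha, cg_pim ha, zU]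
  module

lemma decomp (x : V) (hx : ∀ b, ¬ isNode b → x.2 b = 0) :
    x = x.1 • Lam + ∑ a ∈ nodes, x.2 a • Nv a := by
  refine Prod.ext ?_ ?_
  · simp [Lam, Nv, Prod.fst_sum]
  · funext b
    simp only [Prod.snd_add, Prod.smul_snd, Prod.snd_sum, Pi.add_apply, Pi.smul_apply,
      Finset.sum_apply, Lam, Nv, smul_eq_mul, mul_zero, mul_ite, mul_one]
    rw [Finset.sum_ite_eq]
    by_cases hb : b ∈ nodes
    · simp [hb]
    · simp only [hb, if_false, add_zero, zero_add]
      exact hx b (by simpa [nodes, isNode] using hb)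

theorem iso (x y : V) : form (zmap x) (zmap y) = form x y := by
  rw [zmap_eq x, zmap_eq y]
  have hAB : form (x.1 • zU) (y.1 • zU) = 4 * x.1 * y.1 := by
    rw [form_smul_left, form_smul_right, F1]; ring
  have hAT : form (x.1 • zU) (∑ b ∈ nodes, y.2 b • nimg b) = 0 := by
    rw [form_smul_left, form_sum_right,
      Finset.sum_congr rfl (fun b hb => by rw [form_smul_right, FuN b hb, mul_zero])]
    simp
  have hSB : form (∑ a ∈ nodes, x.2 a • nimg a) (y.1 • zU) = 0 := by
    rw [form_smul_right, form_sum_left,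
      Finset.sum_congr rfl (fun a ha => by rw [form_smul_left, FNu a ha, mul_zero])]
    simp
  have hST : form (∑ a ∈ nodes, x.2 a • nimg a) (∑ b ∈ nodes, y.2 b • nimg b)
      = -2 * ∑ a ∈ nodes, x.2 a * y.2 a := by
    have h : ∀ a ∈ nodes, form (x.2 a • nimg a) (∑ b ∈ nodes, y.2 b • nimg b)
        = x.2 a * (-2 * y.2 a) := by
      intro a ha
      rw [form_smul_left, form_sum_right,
        Finset.sum_congr rfl (fun b hb => by rw [form_smul_right, FNN a ha b hb])]
      simp only [mul_ite, mul_zero, mul_neg, Finset.sum_ite_eq, ha, if_true]; ring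
    rw [form_sum_left, Finset.sum_congr rfl h, Finset.mul_sum]
    exact Finset.sum_congr rfl (fun a _ => by ring)
  rw [form_add_left, form_add_right, form_add_right, hAB, hAT, hSB, hST]
  rw [show form x y = 4 * x.1 * y.1 - 2 * ∑ a ∈ nodes, x.2 a * y.2 a from rfl]
  ring

theorem invol (x : V) (hx : ∀ b, ¬ isNode b → x.2 b = 0) : zmap (zmap x) = x := by
  conv_lhs => rw [zmap_eq x]
  rw [zmap_add, zmap_smul, zmap_zU, zmap_sum,
    Finset.sum_congr rfl (fun a ha => by rw [zmap_smul, zmap_nimg a ha])]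
  exact (decomp x hx).symm
lemma TvE_e : Tv ∅ = (2⁻¹:ℚ) • (Lam - (Nv ∅ + Nv {0,5} + Nv {1,5} + Nv {2,5} + Nv {3,5} + Nv {4,5})) := by
  rw [Tv, show ITrope ∅ = ({(∅ : Jset), ({0,5} : Jset), ({1,5} : Jset), ({2,5} : Jset), ({3,5} : Jset), ({4,5} : Jset)} : Finset Jset) from by decide,
    Finset.sum_insert (by decide), Finset.sum_insert (by decide), Finset.sum_insert (by decide),
    Finset.sum_insert (by decide), Finset.sum_insert (by decide), Finset.sum_singleton]
  module
lemma TvE_05 : Tv {0,5} = (2⁻¹:ℚ) • (Lam - (Nv ∅ + Nv {0,1} + Nv {0,2} + Nv {0,3} + Nv {0,4} + Nv {0,5})) := by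
  rw [Tv, show ITrope {0,5} = ({(∅ : Jset), ({0,1} : Jset), ({0,2} : Jset), ({0,3} : Jset), ({0,4} : Jset), ({0,5} : Jset)} : Finset Jset) from by decide,
    Finset.sum_insert (by decide), Finset.sum_insert (by decide), Finset.sum_insert (by decide),
    Finset.sum_insert (by decide), Finset.sum_insert (by decide), Finset.sum_singleton]
  module
lemma TvE_12 : Tv {1,2} = (2⁻¹:ℚ) • (Lam - (Nv {1,2} + Nv {0,3} + Nv {0,4} + Nv {3,4} + Nv {1,5} + Nv {2,5})) := by
  rw [Tv, show ITrope {1,2} = ({({1,2} : Jset), ({0,3} : Jset), ({0,4} : Jset), ({3,4} : Jset), ({1,5} : Jset), ({2,5} : Jset)} : Finset Jset) from by decide,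
    Finset.sum_insert (by decide), Finset.sum_insert (by decide), Finset.sum_insert (by decide),
    Finset.sum_insert (by decide), Finset.sum_insert (by decide), Finset.sum_singleton]
  module
lemma TvE_34 : Tv {3,4} = (2⁻¹:ℚ) • (Lam - (Nv {0,1} + Nv {0,2} + Nv {1,2} + Nv {3,4} + Nv {3,5} + Nv {4,5})) := by
  rw [Tv, show ITrope {3,4} = ({({0,1} : Jset), ({0,2} : Jset), ({1,2} : Jset), ({3,4} : Jset), ({3,5} : Jset), ({4,5} : Jset)} : Finset Jset) from by decide,
    Finset.sum_insert (by decide), Finset.sum_insert (by decide), Finset.sum_insert (by decide),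
    Finset.sum_insert (by decide), Finset.sum_insert (by decide), Finset.sum_singleton]
  module
lemma TvE_35 : Tv {3,5} = (2⁻¹:ℚ) • (Lam - (Nv ∅ + Nv {0,3} + Nv {1,3} + Nv {2,3} + Nv {3,4} + Nv {3,5})) := by
  rw [Tv, show ITrope {3,5} = ({(∅ : Jset), ({0,3} : Jset), ({1,3} : Jset), ({2,3} : Jset), ({3,4} : Jset), ({3,5} : Jset)} : Finset Jset) from by decide,
    Finset.sum_insert (by decide), Finset.sum_insert (by decide), Finset.sum_insert (by decide),
    Finset.sum_insert (by decide), Finset.sum_insert (by decide), Finset.sum_singleton]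
  module
lemma TvE_04 : Tv {0,4} = (2⁻¹:ℚ) • (Lam - (Nv {1,2} + Nv {1,3} + Nv {2,3} + Nv {0,4} + Nv {0,5} + Nv {4,5})) := by
  rw [Tv, show ITrope {0,4} = ({({1,2} : Jset), ({1,3} : Jset), ({2,3} : Jset), ({0,4} : Jset), ({0,5} : Jset), ({4,5} : Jset)} : Finset Jset) from by decide,
    Finset.sum_insert (by decide), Finset.sum_insert (by decide), Finset.sum_insert (by decide),
    Finset.sum_insert (by decide), Finset.sum_insert (by decide), Finset.sum_singleton]
  module
lemma TvE_45 : Tv {4,5} = (2⁻¹:ℚ) • (Lam - (Nv ∅ + Nv {0,4} + Nv {1,4} + Nv {2,4} + Nv {3,4} + Nv {4,5})) := by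
  rw [Tv, show ITrope {4,5} = ({(∅ : Jset), ({0,4} : Jset), ({1,4} : Jset), ({2,4} : Jset), ({3,4} : Jset), ({4,5} : Jset)} : Finset Jset) from by decide,
    Finset.sum_insert (by decide), Finset.sum_insert (by decide), Finset.sum_insert (by decide),
    Finset.sum_insert (by decide), Finset.sum_insert (by decide), Finset.sum_singleton]
  module
lemma TvE_03 : Tv {0,3} = (2⁻¹:ℚ) • (Lam - (Nv {1,2} + Nv {0,3} + Nv {1,4} + Nv {2,4} + Nv {0,5} + Nv {3,5})) := by
  rw [Tv, show ITrope {0,3} = ({({1,2} : Jset), ({0,3} : Jset), ({1,4} : Jset), ({2,4} : Jset), ({0,5} : Jset), ({3,5} : Jset)} : Finset Jset) from by decide,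
    Finset.sum_insert (by decide), Finset.sum_insert (by decide), Finset.sum_insert (by decide),
    Finset.sum_insert (by decide), Finset.sum_insert (by decide), Finset.sum_singleton]
  module
lemma TvE_13 : Tv {1,3} = (2⁻¹:ℚ) • (Lam - (Nv {0,2} + Nv {1,3} + Nv {0,4} + Nv {2,4} + Nv {1,5} + Nv {3,5})) := by
  rw [Tv, show ITrope {1,3} = ({({0,2} : Jset), ({1,3} : Jset), ({0,4} : Jset), ({2,4} : Jset), ({1,5} : Jset), ({3,5} : Jset)} : Finset Jset) from by decide,
    Finset.sum_insert (by decide), Finset.sum_insert (by decide), Finset.sum_insert (by decide),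
    Finset.sum_insert (by decide), Finset.sum_insert (by decide), Finset.sum_singleton]
  module
lemma TvE_24 : Tv {2,4} = (2⁻¹:ℚ) • (Lam - (Nv {0,1} + Nv {0,3} + Nv {1,3} + Nv {2,4} + Nv {2,5} + Nv {4,5})) := by
  rw [Tv, show ITrope {2,4} = ({({0,1} : Jset), ({0,3} : Jset), ({1,3} : Jset), ({2,4} : Jset), ({2,5} : Jset), ({4,5} : Jset)} : Finset Jset) from by decide,
    Finset.sum_insert (by decide), Finset.sum_insert (by decide), Finset.sum_insert (by decide),
    Finset.sum_insert (by decide), Finset.sum_insert (by decide), Finset.sum_singleton]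
  module
lemma TvE_14 : Tv {1,4} = (2⁻¹:ℚ) • (Lam - (Nv {0,2} + Nv {0,3} + Nv {2,3} + Nv {1,4} + Nv {1,5} + Nv {4,5})) := by
  rw [Tv, show ITrope {1,4} = ({({0,2} : Jset), ({0,3} : Jset), ({2,3} : Jset), ({1,4} : Jset), ({1,5} : Jset), ({4,5} : Jset)} : Finset Jset) from by decide,
    Finset.sum_insert (by decide), Finset.sum_insert (by decide), Finset.sum_insert (by decide),
    Finset.sum_insert (by decide), Finset.sum_insert (by decide), Finset.sum_singleton]
  module
lemma TvE_23 : Tv {2,3} = (2⁻¹:ℚ) • (Lam - (Nv {0,1} + Nv {2,3} + Nv {0,4} + Nv {1,4} + Nv {2,5} + Nv {3,5})) := by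
  rw [Tv, show ITrope {2,3} = ({({0,1} : Jset), ({2,3} : Jset), ({0,4} : Jset), ({1,4} : Jset), ({2,5} : Jset), ({3,5} : Jset)} : Finset Jset) from by decide,
    Finset.sum_insert (by decide), Finset.sum_insert (by decide), Finset.sum_insert (by decide),
    Finset.sum_insert (by decide), Finset.sum_insert (by decide), Finset.sum_singleton]
  module
lemma TvE_15 : Tv {1,5} = (2⁻¹:ℚ) • (Lam - (Nv ∅ + Nv {0,1} + Nv {1,2} + Nv {1,3} + Nv {1,4} + Nv {1,5})) := by
  rw [Tv, show ITrope {1,5} = ({(∅ : Jset), ({0,1} : Jset), ({1,2} : Jset), ({1,3} : Jset), ({1,4} : Jset), ({1,5} : Jset)} : Finset Jset) from by decide,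
    Finset.sum_insert (by decide), Finset.sum_insert (by decide), Finset.sum_insert (by decide),
    Finset.sum_insert (by decide), Finset.sum_insert (by decide), Finset.sum_singleton]
  module
lemma TvE_25 : Tv {2,5} = (2⁻¹:ℚ) • (Lam - (Nv ∅ + Nv {0,2} + Nv {1,2} + Nv {2,3} + Nv {2,4} + Nv {2,5})) := by
  rw [Tv, show ITrope {2,5} = ({(∅ : Jset), ({0,2} : Jset), ({1,2} : Jset), ({2,3} : Jset), ({2,4} : Jset), ({2,5} : Jset)} : Finset Jset) from by decide,
    Finset.sum_insert (by decide), Finset.sum_insert (by decide), Finset.sum_insert (by decide),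
    Finset.sum_insert (by decide), Finset.sum_insert (by decide), Finset.sum_singleton]
  module
lemma TvE_01 : Tv {0,1} = (2⁻¹:ℚ) • (Lam - (Nv {0,1} + Nv {2,3} + Nv {2,4} + Nv {3,4} + Nv {0,5} + Nv {1,5})) := by
  rw [Tv, show ITrope {0,1} = ({({0,1} : Jset), ({2,3} : Jset), ({2,4} : Jset), ({3,4} : Jset), ({0,5} : Jset), ({1,5} : Jset)} : Finset Jset) from by decide,
    Finset.sum_insert (by decide), Finset.sum_insert (by decide), Finset.sum_insert (by decide),
    Finset.sum_insert (by decide), Finset.sum_insert (by decide), Finset.sum_singleton]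
  module
lemma TvE_02 : Tv {0,2} = (2⁻¹:ℚ) • (Lam - (Nv {0,2} + Nv {1,3} + Nv {1,4} + Nv {3,4} + Nv {0,5} + Nv {2,5})) := by
  rw [Tv, show ITrope {0,2} = ({({0,2} : Jset), ({1,3} : Jset), ({1,4} : Jset), ({3,4} : Jset), ({0,5} : Jset), ({2,5} : Jset)} : Finset Jset) from by decide,
    Finset.sum_insert (by decide), Finset.sum_insert (by decide), Finset.sum_insert (by decide),
    Finset.sum_insert (by decide), Finset.sum_insert (by decide), Finset.sum_singleton]
  module
lemma zN_e : zmap (Nv ∅) = Nv {0,5} := by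
  rw [zmap_Nv (show (∅:Jset) ∈ nodes from by decide)]; rfl
lemma zN_05 : zmap (Nv {0,5}) = Nv ∅ := by
  rw [zmap_Nv (show ({0,5}:Jset) ∈ nodes from by decide)]; rfl
lemma zN_15 : zmap (Nv {1,5}) = Nv {2,5} := by
  rw [zmap_Nv (show ({1,5}:Jset) ∈ nodes from by decide)]; rfl
lemma zN_25 : zmap (Nv {2,5}) = Nv {1,5} := by
  rw [zmap_Nv (show ({2,5}:Jset) ∈ nodes from by decide)]; rfl
lemma zN_01 : zmap (Nv {0,1}) = Nv {0,2} := by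
  rw [zmap_Nv (show ({0,1}:Jset) ∈ nodes from by decide)]; rfl
lemma zN_02 : zmap (Nv {0,2}) = Nv {0,1} := by
  rw [zmap_Nv (show ({0,2}:Jset) ∈ nodes from by decide)]; rfl
lemma zN_12 : zmap (Nv {1,2}) = Nv {3,4} := by
  rw [zmap_Nv (show ({1,2}:Jset) ∈ nodes from by decide)]; rfl
lemma zN_34 : zmap (Nv {3,4}) = Nv {1,2} := by
  rw [zmap_Nv (show ({3,4}:Jset) ∈ nodes from by decide)]; rfl
lemma zN_13 : zmap (Nv {1,3}) = Nv {1,3} := by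
  rw [zmap_Nv (show ({1,3}:Jset) ∈ nodes from by decide)]; rfl
lemma zN_23 : zmap (Nv {2,3}) = Nv {2,3} := by
  rw [zmap_Nv (show ({2,3}:Jset) ∈ nodes from by decide)]; rfl
lemma zN_14 : zmap (Nv {1,4}) = Nv {1,4} := by
  rw [zmap_Nv (show ({1,4}:Jset) ∈ nodes from by decide)]; rfl
lemma zN_24 : zmap (Nv {2,4}) = Nv {2,4} := by
  rw [zmap_Nv (show ({2,4}:Jset) ∈ nodes from by decide)]; rfl
lemma zN_35 : zmap (Nv {3,5}) = Lam - Qv + Nv {4,5} := by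
  rw [zmap_Nv (show ({3,5}:Jset) ∈ nodes from by decide)]; rfl
lemma zN_45 : zmap (Nv {4,5}) = Lam - Qv + Nv {3,5} := by
  rw [zmap_Nv (show ({4,5}:Jset) ∈ nodes from by decide)]; rfl
lemma zN_03 : zmap (Nv {0,3}) = Lam - Qv + Nv {0,4} := by
  rw [zmap_Nv (show ({0,3}:Jset) ∈ nodes from by decide)]; rfl
lemma zN_04 : zmap (Nv {0,4}) = Lam - Qv + Nv {0,3} := by
  rw [zmap_Nv (show ({0,4}:Jset) ∈ nodes from by decide)]; rfl
lemma zT_e : zmap (Tv ∅) = Tv ∅ := by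
  simp only [TvE_e, TvE_05, TvE_12, TvE_34, TvE_35, TvE_04, TvE_45, TvE_03, TvE_13, TvE_24, TvE_14, TvE_23, TvE_15, TvE_25, TvE_01, TvE_02, zN_e, zN_05, zN_12, zN_34, zN_35, zN_04, zN_45, zN_03, zN_13, zN_24, zN_14, zN_23, zN_15, zN_25, zN_01, zN_02, zmap_smul, zmap_sub, zmap_add, zmap_Lam]
  simp only [zU, Qv]; module
lemma zT_05 : zmap (Tv {0,5}) = Tv {0,5} := by
  simp only [TvE_e, TvE_05, TvE_12, TvE_34, TvE_35, TvE_04, TvE_45, TvE_03, TvE_13, TvE_24, TvE_14, TvE_23, TvE_15, TvE_25, TvE_01, TvE_02, zN_e, zN_05, zN_12, zN_34, zN_35, zN_04, zN_45, zN_03, zN_13, zN_24, zN_14, zN_23, zN_15, zN_25, zN_01, zN_02, zmap_smul, zmap_sub, zmap_add, zmap_Lam]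
  simp only [zU, Qv]; module
lemma zT_12 : zmap (Tv {1,2}) = Tv {1,2} := by
  simp only [TvE_e, TvE_05, TvE_12, TvE_34, TvE_35, TvE_04, TvE_45, TvE_03, TvE_13, TvE_24, TvE_14, TvE_23, TvE_15, TvE_25, TvE_01, TvE_02, zN_e, zN_05, zN_12, zN_34, zN_35, zN_04, zN_45, zN_03, zN_13, zN_24, zN_14, zN_23, zN_15, zN_25, zN_01, zN_02, zmap_smul, zmap_sub, zmap_add, zmap_Lam]
  simp only [zU, Qv]; module
lemma zT_34 : zmap (Tv {3,4}) = Tv {3,4} := by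
  simp only [TvE_e, TvE_05, TvE_12, TvE_34, TvE_35, TvE_04, TvE_45, TvE_03, TvE_13, TvE_24, TvE_14, TvE_23, TvE_15, TvE_25, TvE_01, TvE_02, zN_e, zN_05, zN_12, zN_34, zN_35, zN_04, zN_45, zN_03, zN_13, zN_24, zN_14, zN_23, zN_15, zN_25, zN_01, zN_02, zmap_smul, zmap_sub, zmap_add, zmap_Lam]
  simp only [zU, Qv]; module
lemma zT_35 : zmap (Tv {3,5}) = Tv {0,4} := by
  simp only [TvE_e, TvE_05, TvE_12, TvE_34, TvE_35, TvE_04, TvE_45, TvE_03, TvE_13, TvE_24, TvE_14, TvE_23, TvE_15, TvE_25, TvE_01, TvE_02, zN_e, zN_05, zN_12, zN_34, zN_35, zN_04, zN_45, zN_03, zN_13, zN_24, zN_14, zN_23, zN_15, zN_25, zN_01, zN_02, zmap_smul, zmap_sub, zmap_add, zmap_Lam]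
  simp only [zU, Qv]; module
lemma zT_04 : zmap (Tv {0,4}) = Tv {3,5} := by
  simp only [TvE_e, TvE_05, TvE_12, TvE_34, TvE_35, TvE_04, TvE_45, TvE_03, TvE_13, TvE_24, TvE_14, TvE_23, TvE_15, TvE_25, TvE_01, TvE_02, zN_e, zN_05, zN_12, zN_34, zN_35, zN_04, zN_45, zN_03, zN_13, zN_24, zN_14, zN_23, zN_15, zN_25, zN_01, zN_02, zmap_smul, zmap_sub, zmap_add, zmap_Lam]
  simp only [zU, Qv]; module
lemma zT_45 : zmap (Tv {4,5}) = Tv {0,3} := by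
  simp only [TvE_e, TvE_05, TvE_12, TvE_34, TvE_35, TvE_04, TvE_45, TvE_03, TvE_13, TvE_24, TvE_14, TvE_23, TvE_15, TvE_25, TvE_01, TvE_02, zN_e, zN_05, zN_12, zN_34, zN_35, zN_04, zN_45, zN_03, zN_13, zN_24, zN_14, zN_23, zN_15, zN_25, zN_01, zN_02, zmap_smul, zmap_sub, zmap_add, zmap_Lam]
  simp only [zU, Qv]; module
lemma zT_03 : zmap (Tv {0,3}) = Tv {4,5} := by
  simp only [TvE_e, TvE_05, TvE_12, TvE_34, TvE_35, TvE_04, TvE_45, TvE_03, TvE_13, TvE_24, TvE_14, TvE_23, TvE_15, TvE_25, TvE_01, TvE_02, zN_e, zN_05, zN_12, zN_34, zN_35, zN_04, zN_45, zN_03, zN_13, zN_24, zN_14, zN_23, zN_15, zN_25, zN_01, zN_02, zmap_smul, zmap_sub, zmap_add, zmap_Lam]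
  simp only [zU, Qv]; module
lemma zT_13 : zmap (Tv {1,3}) = Tv {2,4} := by
  simp only [TvE_e, TvE_05, TvE_12, TvE_34, TvE_35, TvE_04, TvE_45, TvE_03, TvE_13, TvE_24, TvE_14, TvE_23, TvE_15, TvE_25, TvE_01, TvE_02, zN_e, zN_05, zN_12, zN_34, zN_35, zN_04, zN_45, zN_03, zN_13, zN_24, zN_14, zN_23, zN_15, zN_25, zN_01, zN_02, zmap_smul, zmap_sub, zmap_add, zmap_Lam]
  simp only [zU, Qv]; module
lemma zT_24 : zmap (Tv {2,4}) = Tv {1,3} := by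
  simp only [TvE_e, TvE_05, TvE_12, TvE_34, TvE_35, TvE_04, TvE_45, TvE_03, TvE_13, TvE_24, TvE_14, TvE_23, TvE_15, TvE_25, TvE_01, TvE_02, zN_e, zN_05, zN_12, zN_34, zN_35, zN_04, zN_45, zN_03, zN_13, zN_24, zN_14, zN_23, zN_15, zN_25, zN_01, zN_02, zmap_smul, zmap_sub, zmap_add, zmap_Lam]
  simp only [zU, Qv]; module
lemma zT_14 : zmap (Tv {1,4}) = Tv {2,3} := by
  simp only [TvE_e, TvE_05, TvE_12, TvE_34, TvE_35, TvE_04, TvE_45, TvE_03, TvE_13, TvE_24, TvE_14, TvE_23, TvE_15, TvE_25, TvE_01, TvE_02, zN_e, zN_05, zN_12, zN_34, zN_35, zN_04, zN_45, zN_03, zN_13, zN_24, zN_14, zN_23, zN_15, zN_25, zN_01, zN_02, zmap_smul, zmap_sub, zmap_add, zmap_Lam]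
  simp only [zU, Qv]; module
lemma zT_23 : zmap (Tv {2,3}) = Tv {1,4} := by
  simp only [TvE_e, TvE_05, TvE_12, TvE_34, TvE_35, TvE_04, TvE_45, TvE_03, TvE_13, TvE_24, TvE_14, TvE_23, TvE_15, TvE_25, TvE_01, TvE_02, zN_e, zN_05, zN_12, zN_34, zN_35, zN_04, zN_45, zN_03, zN_13, zN_24, zN_14, zN_23, zN_15, zN_25, zN_01, zN_02, zmap_smul, zmap_sub, zmap_add, zmap_Lam]
  simp only [zU, Qv]; module
lemma zT_15 : zmap (Tv {1,5}) = Lam - Qv + Tv {0,2} := by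
  simp only [TvE_e, TvE_05, TvE_12, TvE_34, TvE_35, TvE_04, TvE_45, TvE_03, TvE_13, TvE_24, TvE_14, TvE_23, TvE_15, TvE_25, TvE_01, TvE_02, zN_e, zN_05, zN_12, zN_34, zN_35, zN_04, zN_45, zN_03, zN_13, zN_24, zN_14, zN_23, zN_15, zN_25, zN_01, zN_02, zmap_smul, zmap_sub, zmap_add, zmap_Lam]
  simp only [zU, Qv]; module
lemma zT_25 : zmap (Tv {2,5}) = Lam - Qv + Tv {0,1} := by
  simp only [TvE_e, TvE_05, TvE_12, TvE_34, TvE_35, TvE_04, TvE_45, TvE_03, TvE_13, TvE_24, TvE_14, TvE_23, TvE_15, TvE_25, TvE_01, TvE_02, zN_e, zN_05, zN_12, zN_34, zN_35, zN_04, zN_45, zN_03, zN_13, zN_24, zN_14, zN_23, zN_15, zN_25, zN_01, zN_02, zmap_smul, zmap_sub, zmap_add, zmap_Lam]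
  simp only [zU, Qv]; module
lemma zT_01 : zmap (Tv {0,1}) = Lam - Qv + Tv {2,5} := by
  simp only [TvE_e, TvE_05, TvE_12, TvE_34, TvE_35, TvE_04, TvE_45, TvE_03, TvE_13, TvE_24, TvE_14, TvE_23, TvE_15, TvE_25, TvE_01, TvE_02, zN_e, zN_05, zN_12, zN_34, zN_35, zN_04, zN_45, zN_03, zN_13, zN_24, zN_14, zN_23, zN_15, zN_25, zN_01, zN_02, zmap_smul, zmap_sub, zmap_add, zmap_Lam]
  simp only [zU, Qv]; module
lemma zT_02 : zmap (Tv {0,2}) = Lam - Qv + Tv {1,5} := by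
  simp only [TvE_e, TvE_05, TvE_12, TvE_34, TvE_35, TvE_04, TvE_45, TvE_03, TvE_13, TvE_24, TvE_14, TvE_23, TvE_15, TvE_25, TvE_01, TvE_02, zN_e, zN_05, zN_12, zN_34, zN_35, zN_04, zN_45, zN_03, zN_13, zN_24, zN_14, zN_23, zN_15, zN_25, zN_01, zN_02, zmap_smul, zmap_sub, zmap_add, zmap_Lam]
  simp only [zU, Qv]; module

/-- The Hutchinson–Göpel-type involution `z_g` for `g = {46,56,14,15}` is an
isometry of `NS(S)` and an involution, acting by the table of Lemma 2.2:
it fixes `T_0, T_16, T_23, T_45` (and `N_24, N_34, N_25, N_35`), swaps the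
trope pairs `(T_46,T_15)`, `(T_56,T_14)`, `(T_24,T_35)`, `(T_25,T_34)`,
sends `Λ ↦ 3Λ - 2Q`, and sends `T_β ↦ Λ - Q + T_{β+(45)}` for
`β ∈ g' = {26,36,12,13}`. -/
theorem statement15 :
    (∀ x y : V, form (zmap x) (zmap y) = form x y) ∧
    (∀ x : V, (∀ b, ¬ isNode b → x.2 b = 0) → zmap (zmap x) = x) ∧
    zmap Lam = (3 : ℚ) • Lam - (2 : ℚ) • Qv ∧
    zmap (Tv ∅) = Tv ∅ ∧ zmap (Tv {0,5}) = Tv {0,5} ∧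
    zmap (Tv {1,2}) = Tv {1,2} ∧ zmap (Tv {3,4}) = Tv {3,4} ∧
    zmap (Nv {1,3}) = Nv {1,3} ∧ zmap (Nv {2,3}) = Nv {2,3} ∧
    zmap (Nv {1,4}) = Nv {1,4} ∧ zmap (Nv {2,4}) = Nv {2,4} ∧
    zmap (Nv ∅) = Nv {0,5} ∧ zmap (Nv {0,5}) = Nv ∅ ∧
    zmap (Nv {1,5}) = Nv {2,5} ∧ zmap (Nv {2,5}) = Nv {1,5} ∧
    zmap (Nv {0,1}) = Nv {0,2} ∧ zmap (Nv {0,2}) = Nv {0,1} ∧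
    zmap (Nv {1,2}) = Nv {3,4} ∧ zmap (Nv {3,4}) = Nv {1,2} ∧
    zmap (Nv {3,5}) = Lam - Qv + Nv {4,5} ∧ zmap (Nv {4,5}) = Lam - Qv + Nv {3,5} ∧
    zmap (Nv {0,3}) = Lam - Qv + Nv {0,4} ∧ zmap (Nv {0,4}) = Lam - Qv + Nv {0,3} ∧
    zmap (Tv {3,5}) = Tv {0,4} ∧ zmap (Tv {0,4}) = Tv {3,5} ∧
    zmap (Tv {4,5}) = Tv {0,3} ∧ zmap (Tv {0,3}) = Tv {4,5} ∧
    zmap (Tv {1,3}) = Tv {2,4} ∧ zmap (Tv {2,4}) = Tv {1,3} ∧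
    zmap (Tv {1,4}) = Tv {2,3} ∧ zmap (Tv {2,3}) = Tv {1,4} ∧
    zmap (Tv {1,5}) = Lam - Qv + Tv {0,2} ∧ zmap (Tv {2,5}) = Lam - Qv + Tv {0,1} ∧
    zmap (Tv {0,1}) = Lam - Qv + Tv {2,5} ∧ zmap (Tv {0,2}) = Lam - Qv + Tv {1,5} :=
  ⟨iso, invol, zmap_Lam, zT_e, zT_05, zT_12, zT_34,
   zN_13, zN_23, zN_14, zN_24, zN_e, zN_05, zN_15, zN_25, zN_01, zN_02, zN_12, zN_34,
   zN_35, zN_45, zN_03, zN_04,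
   zT_35, zT_04, zT_45, zT_03, zT_13, zT_24, zT_14, zT_23,
   zT_15, zT_25, zT_01, zT_02⟩
end
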